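/- In misère NimG-RM on a bipartite graph with no null-weight vertices, if some maximum matching M of G does not cover the starting vertex u, then the second player wins: whatever neighbour v the first player moves to, v is covered by M (since M is maximum), and the second player wins by always removing all tokens and moving along M-edges; if this strategy ever got stuck it would produce an augmenting path (f₁,s₁,…,fₙ,sₙ,f_{n+1}) for M, contradicting maximality. -/
import Mathlib


universe u
mutual
  inductive GNormalWin {α : Type u} (moves : α → α → Prop) : α → Prop
    | step {p q : α} : moves p q → GNormalLose moves q → GNormalWin moves p
  inductive GNormalLose {α : Type u} (moves : α → α → Prop) : α → Prop
    | intro {p : α} : (∀ q, moves p q → GNormalWin moves q) → GNormalLose moves p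
end

mutual
  inductive GMisereWin {α : Type u} (moves : α → α → Prop) : α → Prop
    | terminal {p : α} : (∀ q, ¬ moves p q) → GMisereWin moves p
    | step {p q : α} : moves p q → GMisereLose moves q → GMisereWin moves p
  inductive GMisereLose {α : Type u} (moves : α → α → Prop) : α → Prop
    | intro {p q₀ : α} : moves p q₀ → (∀ q, moves p q → GMisereWin moves q) → GMisereLose moves p
end

def nimMove {V : Type u} (adj : V → V → Prop) (p q : V × (V → ℕ)) : Prop :=
  adj p.1 q.1 ∧ q.2 p.1 < p.2 p.1 ∧ ∀ v, v ≠ p.1 → q.2 v = p.2 v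

mutual
  inductive NimRMWin {V : Type u} (adj : V → V → Prop) : V × (V → ℕ) → Prop
    | zero {p} : p.2 p.1 = 0 → NimRMWin adj p
    | step {p q} : nimMove adj p q → NimRMLose adj q → NimRMWin adj p
  inductive NimRMLose {V : Type u} (adj : V → V → Prop) : V × (V → ℕ) → Prop
    | intro {p} : p.2 p.1 ≠ 0 → (∀ q, nimMove adj p q → NimRMWin adj q) → NimRMLose adj p
end

def vgMove {V : Type u} (A : V → V → Prop) (p q : Set V × V) : Prop :=
  A p.2 q.2 ∧ q.2 ∈ p.1 ∧ q.2 ≠ p.2 ∧ q.1 = p.1 \ {p.2}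

def addOut {V : Type u} (A : V → V → Prop) : V ⊕ V → V ⊕ V → Prop
  | .inl a, .inl b => A a b
  | .inl a, .inr b => a = b
  | _, _ => False

def MaxMatching {V : Type u} (G : SimpleGraph V) (M : G.Subgraph) : Prop :=
  M.IsMatching ∧ ∀ N : G.Subgraph, N.IsMatching → N.edgeSet.ncard ≤ M.edgeSet.ncard

open SimpleGraph Subgraph

lemma aux_deletePair_matching {V : Type} {G : SimpleGraph V} {M : G.Subgraph}
    (hm : M.IsMatching) {s t : V} (hst : M.Adj s t) :
    (M.deleteVerts {s, t}).IsMatching := by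
  intro v hv
  obtain ⟨hvM, hvst⟩ := hv
  simp only [Set.mem_insert_iff, Set.mem_singleton_iff, not_or] at hvst
  obtain ⟨w, hw, huniq⟩ := hm hvM
  have hws : w ≠ s := by
    rintro rfl
    exact hvst.2 ((hm (M.edge_vert hst)).unique hw.symm hst)
  have hwt : w ≠ t := by
    rintro rfl
    exact hvst.1 ((hm (M.edge_vert hst.symm)).unique hw.symm hst.symm)
  refine ⟨w, ?_, ?_⟩
  · simp only [deleteVerts_adj, Set.mem_insert_iff, Set.mem_singleton_iff, not_or]
    exact ⟨hvM, ⟨hvst.1, hvst.2⟩, M.edge_vert hw.symm, ⟨hws, hwt⟩, hw⟩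
  · intro y hy
    simp only [deleteVerts_adj] at hy
    exact huniq y hy.2.2.2.2

lemma aux_deletePair_edgeSet {V : Type} {G : SimpleGraph V} {M : G.Subgraph}
    (hm : M.IsMatching) {s t : V} (hst : M.Adj s t) :
    (M.deleteVerts {s, t}).edgeSet = M.edgeSet \ {s(s, t)} := by
  have hsP : ∀ c, M.Adj s c → c = t := fun c hc => (hm (M.edge_vert hst)).unique hc hst
  have htP : ∀ c, M.Adj t c → c = s := fun c hc => (hm (M.edge_vert hst.symm)).unique hc hst.symm
  ext e
  induction e using Sym2.inductionOn with
  | hf a b =>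
    rw [Set.mem_diff, Set.mem_singleton_iff]
    rw [Subgraph.mem_edgeSet, Subgraph.mem_edgeSet, deleteVerts_adj]
    simp only [Set.mem_insert_iff, Set.mem_singleton_iff, not_or]
    constructor
    · rintro ⟨_, ⟨has, hat⟩, _, ⟨hbs, hbt⟩, hab⟩
      refine ⟨hab, fun h => ?_⟩
      rw [Sym2.eq_iff] at h
      rcases h with ⟨rfl, rfl⟩ | ⟨rfl, rfl⟩ <;> simp_all
    · rintro ⟨hab, hne⟩
      have has : a ≠ s := by rintro rfl; exact hne (by rw [hsP b hab])
      have hat : a ≠ t := by rintro rfl; rw [htP b hab] at hne; exact hne (Sym2.eq_swap)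
      have hbs : b ≠ s := by rintro rfl; rw [hsP a hab.symm] at hne; exact hne (Sym2.eq_swap)
      have hbt : b ≠ t := by rintro rfl; exact hne (by rw [htP a hab.symm])
      exact ⟨M.edge_vert hab, ⟨has, hat⟩, M.edge_vert hab.symm, ⟨hbs, hbt⟩, hab⟩

lemma aux_main {V : Type} [Fintype V] (G : SimpleGraph V) (C : G.Coloring (Fin 2))
    (k : ℕ) (hmax : ∀ N : G.Subgraph, N.IsMatching → N.edgeSet.ncard ≤ k) (cu : Fin 2) :
    ∀ (n : ℕ) (f : V → ℕ), (∑ v, f v) = n → ∀ (x : V) (M : G.Subgraph), M.IsMatching →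
      M.edgeSet.ncard = k → C x = cu → x ∉ M.verts → f x ≠ 0 →
      (∀ z r, C z = cu → f z = 0 → M.Adj z r → f r = 0) →
      NimRMLose G.Adj (x, f) := by
  classical
  intro n
  induction n using Nat.strong_induction_on with
  | _ n IH =>
    intro f hn x M hMm hMk hCx hxM hfx hinv
    refine NimRMLose.intro hfx ?_
    rintro ⟨s, g⟩ ⟨hadj, hdec, hoff⟩
    simp only at hadj hdec hoff
    have hsx : s ≠ x := fun h => G.irrefl (h ▸ hadj)
    by_cases hgs : g s = 0
    · exact NimRMWin.zero hgs
    -- s must be covered by M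
    have hsM : s ∈ M.verts := by
      by_contra hsM
      set N : G.Subgraph := M ⊔ G.subgraphOfAdj hadj with hN
      have hd : Disjoint M.support (G.subgraphOfAdj hadj).support := by
        rw [hMm.support_eq_verts, (IsMatching.subgraphOfAdj hadj).support_eq_verts]
        simp only [subgraphOfAdj_verts, Set.disjoint_right, Set.mem_insert_iff,
          Set.mem_singleton_iff]
        rintro a (rfl | rfl) <;> assumption
      have hNm : N.IsMatching := hMm.sup (IsMatching.subgraphOfAdj hadj) hd
      have hxs : s(x, s) ∉ M.edgeSet := fun h => hxM (M.edge_vert h)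
      have hcard : N.edgeSet.ncard = k + 1 := by
        rw [hN, Subgraph.edgeSet_sup, edgeSet_subgraphOfAdj,
          Set.ncard_union_eq (by simpa using hxs) (Set.toFinite _) (Set.toFinite _),
          hMk, Set.ncard_singleton]
      have := hmax N hNm
      omega
    obtain ⟨t, hts, htuniq⟩ := hMm hsM
    have htG : G.Adj s t := M.adj_sub hts
    have hst_ne : s ≠ t := htG.ne
    have htM : t ∈ M.verts := M.edge_vert hts.symm
    have htx : t ≠ x := fun h => hxM (h ▸ htM)
    have hCs : C s ≠ cu := fun h => (C.valid hadj) (hCx.trans h.symm)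
    have hCt : C t = cu := by
      have h1 : C t ≠ C s := C.valid htG.symm
      have h2 : C x ≠ C s := C.valid hadj
      have : ∀ a b c : Fin 2, a ≠ b → c ≠ b → a = c := by decide
      exact (this (C t) (C s) (C x) h1 h2).trans hCx
    have hfs : f s ≠ 0 := by rw [← hoff s hsx]; exact hgs
    have hft : f t ≠ 0 := fun h0 => hfs (hinv t s hCt h0 hts.symm)
    set h : V → ℕ := Function.update g s 0 with hh
    have hmv : nimMove G.Adj (s, g) (t, h) := by
      refine ⟨htG, ?_, fun v hv => Function.update_of_ne hv _ _⟩
      simp only [hh, Function.update_self]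
      exact Nat.pos_of_ne_zero hgs
    -- the rotated matching
    set M₂ : G.Subgraph := (M.deleteVerts {s, t}) ⊔ G.subgraphOfAdj hadj with hM₂
    have hd₂ : Disjoint (M.deleteVerts {s, t}).support (G.subgraphOfAdj hadj).support := by
      rw [(aux_deletePair_matching hMm hts).support_eq_verts,
        (IsMatching.subgraphOfAdj hadj).support_eq_verts]
      simp only [deleteVerts_verts, subgraphOfAdj_verts, Set.disjoint_right,
        Set.mem_insert_iff, Set.mem_singleton_iff, Set.mem_diff]
      rintro a (rfl | rfl)
      · rintro ⟨hx, -⟩; exact hxM hx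
      · rintro ⟨-, hs⟩; exact hs (by simp)
    have hM₂m : M₂.IsMatching :=
      (aux_deletePair_matching hMm hts).sup (IsMatching.subgraphOfAdj hadj) hd₂
    have hM₂k : M₂.edgeSet.ncard = k := by
      rw [hM₂, Subgraph.edgeSet_sup, aux_deletePair_edgeSet hMm hts, edgeSet_subgraphOfAdj]
      have hxsM : s(x, s) ∉ M.edgeSet \ {s(s, t)} := by
        rintro ⟨hmem, -⟩; exact hxM (M.edge_vert hmem)
      rw [Set.ncard_union_eq (by simpa using hxsM) (Set.toFinite _) (Set.toFinite _),
        Set.ncard_singleton]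
      have := Set.ncard_diff_singleton_add_one (show s(s,t) ∈ M.edgeSet from hts)
        (Set.toFinite _)
      omega
    have htM₂ : t ∉ M₂.verts := by
      simp only [hM₂, verts_sup, deleteVerts_verts, subgraphOfAdj_verts,
        Set.mem_union, Set.mem_diff, Set.mem_insert_iff, Set.mem_singleton_iff]
      push_neg
      exact ⟨fun _ => by simp, htx, hst_ne.symm⟩
    have hht : h t ≠ 0 := by
      rw [hh, Function.update_of_ne (Ne.symm hst_ne), hoff t htx]
      exact hft
    have hinv₂ : ∀ z r, C z = cu → h z = 0 → M₂.Adj z r → h r = 0 := by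
      intro z r hCz hz0 hzr
      rw [hM₂, Subgraph.sup_adj] at hzr
      rcases hzr with hzr | hzr
      · simp only [deleteVerts_adj, Set.mem_insert_iff, Set.mem_singleton_iff, not_or] at hzr
        obtain ⟨hzM, ⟨hzs, hzt⟩, hrM, ⟨hrs, hrt⟩, hzrM⟩ := hzr
        have hzx : z ≠ x := fun hzx => hxM (hzx ▸ hzM)
        have hrx : r ≠ x := fun hrx => hxM (hrx ▸ hrM)
        have hfz : f z = 0 := by
          rw [← hoff z hzx, ← Function.update_of_ne hzs 0 g]; exact hz0
        have hfr : f r = 0 := hinv z r hCz hfz hzrM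
        rw [hh, Function.update_of_ne hrs, hoff r hrx]
        exact hfr
      · rw [subgraphOfAdj_adj, Sym2.eq_iff] at hzr
        rcases hzr with ⟨rfl, rfl⟩ | ⟨rfl, rfl⟩
        · simp [hh]
        · exact absurd hCz hCs
    have hsum : (∑ v, h v) < n := by
      rw [← hn]
      apply Finset.sum_lt_sum
      · intro v _
        by_cases hvs : v = s
        · subst hvs; simp [hh]
        · rw [hh, Function.update_of_ne hvs]
          by_cases hvx : v = x
          · subst hvx; exact le_of_lt hdec
          · rw [hoff v hvx]
      · refine ⟨x, Finset.mem_univ x, ?_⟩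
        rw [hh, Function.update_of_ne hsx.symm]  -- careful: need x ≠ s
        exact hdec
    exact NimRMWin.step hmv
      (IH _ hsum h rfl t M₂ hM₂m hM₂k hCt htM₂ hht hinv₂)

/-- Misère NimG-RM on a bipartite graph with positive weights: if some maximum matching
does not cover the starting vertex `u`, then the second player wins. -/
theorem stmt9 {V : Type} [Fintype V] (G : SimpleGraph V) (hbip : G.Colorable 2)
    (w : V → ℕ) (hw : ∀ v, 0 < w v) (u : V)
    (M : G.Subgraph) (hM : MaxMatching G M) (hMu : u ∉ M.verts) :
    NimRMLose G.Adj (u, w) := by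
  classical
  obtain ⟨C⟩ := hbip
  refine aux_main G C M.edgeSet.ncard hM.2 (C u) (∑ v, w v) w rfl u M hM.1 rfl rfl hMu
    (hw u).ne' ?_
  intro z r _ hz0 _
  exact absurd hz0 (hw z).ne'
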